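/- The vector Φe₀ has coordinates ⟨Φe₀, e_n⟩ = i·(−1)^n/n for n ≥ 1 and ⟨Φe₀, e₀⟩ = 0 (so Φe₀ corresponds to the boundary function of −i·log(1+z)), and Φe₀ ∉ D(N); equivalently, e₀ ∉ D(NΦ). -/

import Mathlib

/-!
Under `J`, `e₀` is the constant function `1`, so `Φe₀ = J*θ` and its coordinates are the
Fourier coefficients of `θ` on `(−π, π]` with nonnegative index. Integrating by parts, the
`n`-th coefficient of `θ` is `i(−1)ⁿ/n` for `n ≠ 0`, while the zeroth one is the mean of `θ`,
namely `0`. Hence `n²|⟨Φe₀, e_n⟩|² = 1` for every `n ≥ 1`, which is not summable.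
-/

noncomputable section

open MeasureTheory Complex Real AddCircle ContinuousLinearMap
open scoped ENNReal NNReal

namespace GW

/-- The Hilbert space `H = ℓ²(ℕ, ℂ)`. -/
abbrev H : Type := lp (fun _ : ℕ => ℂ) 2

instance fact2pi : Fact (0 < 2 * Real.pi) := ⟨by positivity⟩

/-- The circle `𝕋`, realized as `ℝ / 2πℤ`; the point `θ` corresponds to `e^{iθ}`. -/
abbrev Circle2 : Type := AddCircle (2 * Real.pi)

/-- Normalized Lebesgue (Haar) measure `dθ/2π` on the circle. -/
abbrev μT : Measure Circle2 := @AddCircle.haarAddCircle (2 * Real.pi) fact2pi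

/-- `L²(𝕋)` with respect to normalized Lebesgue measure. -/
abbrev L2T : Type := MeasureTheory.Lp ℂ 2 μT

/-- Extension of an `ℕ`-indexed coefficient sequence to `ℤ` by zero. -/
def extz (f : ℕ → ℂ) : ℤ → ℂ := fun n => if 0 ≤ n then f n.toNat else 0

lemma extz_natCast (f : ℕ → ℂ) (n : ℕ) : extz f (n : ℤ) = f n := by
  simp [extz]

lemma extz_memℓp (f : H) : Memℓp (extz ⇑f) 2 := by
  apply memℓp_gen
  have hs : Summable fun n : ℕ => ‖(⇑f) n‖ ^ (2 : ℝ≥0∞).toReal :=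
    (lp.memℓp f).summable (by norm_num)
  have h0 : ∀ z : ℤ, z ∉ Set.range ((↑·) : ℕ → ℤ) →
      ‖extz ⇑f z‖ ^ (2 : ℝ≥0∞).toReal = 0 := by
    intro z hz
    have hneg : ¬ (0 : ℤ) ≤ z := fun h => hz ⟨z.toNat, by simpa using Int.toNat_of_nonneg h⟩
    simp only [extz, if_neg hneg, norm_zero]
    rw [Real.zero_rpow (by norm_num)]
  have hinj : Function.Injective ((↑·) : ℕ → ℤ) := fun a b h => by simpa using h
  refine (hinj.summable_iff h0).mp ?_
  refine hs.congr fun n => ?_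
  simp [Function.comp, extz_natCast]

/-- The zero-extension `ℓ²(ℕ,ℂ) → ℓ²(ℤ,ℂ)`. -/
def extlp (f : H) : lp (fun _ : ℤ => ℂ) 2 := ⟨extz ⇑f, extz_memℓp f⟩

/-- `J` as a plain function: send `(c_n)_{n∈ℕ}` to `Σ_{n∈ℕ} c_n e^{inθ}` in `L²(𝕋)`,
via the Fourier Hilbert basis of `L²(𝕋)`. -/
def Jmap (f : H) : L2T := (@fourierBasis (2 * Real.pi) fact2pi).repr.symm (extlp f)

lemma extlp_add (f g : H) : extlp (f + g) = extlp f + extlp g := by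
  apply Subtype.ext
  funext n
  show extz (⇑(f + g)) n = extz ⇑f n + extz ⇑g n
  rcases le_or_gt 0 n with h | h
  · simp only [extz, if_pos h]
    exact congrFun (lp.coeFn_add f g) n.toNat
  · simp [extz, if_neg (not_le.mpr h)]

lemma extlp_smul (c : ℂ) (f : H) : extlp (c • f) = c • extlp f := by
  apply Subtype.ext
  funext n
  show extz (⇑(c • f)) n = c • extz ⇑f n
  rcases le_or_gt 0 n with h | h
  · simp only [extz, if_pos h]
    rw [lp.coeFn_smul]
    rfl
  · simp [extz, if_neg (not_le.mpr h)]

/-- `J` as a linear map. -/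
def Jlin : H →ₗ[ℂ] L2T where
  toFun := Jmap
  map_add' f g := show Jmap (f + g) = Jmap f + Jmap g by
    unfold Jmap; rw [extlp_add, map_add]
  map_smul' c f := show Jmap (c • f) = c • Jmap f by
    unfold Jmap; rw [extlp_smul, _root_.map_smul]

lemma norm_extlp (f : H) : ‖extlp f‖ = ‖f‖ := by
  rw [lp.norm_eq_tsum_rpow (by norm_num : 0 < (2 : ℝ≥0∞).toReal) (extlp f),
    lp.norm_eq_tsum_rpow (by norm_num : 0 < (2 : ℝ≥0∞).toReal) f]
  congr 1
  have hinj : Function.Injective ((↑·) : ℕ → ℤ) := fun a b h => by simpa using h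
  have h0 : ∀ z, z ∉ Set.range ((↑·) : ℕ → ℤ) →
      ‖extlp f z‖ ^ (2 : ℝ≥0∞).toReal = 0 := by
    intro z hz
    have hneg : ¬ (0 : ℤ) ≤ z := fun h => hz ⟨z.toNat, by simpa using Int.toNat_of_nonneg h⟩
    show ‖extz ⇑f z‖ ^ (2 : ℝ≥0∞).toReal = 0
    simp only [extz, if_neg hneg, norm_zero]
    rw [Real.zero_rpow (by norm_num)]
  have hsupp : (Function.support fun z => ‖extlp f z‖ ^ (2 : ℝ≥0∞).toReal) ⊆
      Set.range ((↑·) : ℕ → ℤ) := by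
    intro z hz
    by_contra h
    exact hz (h0 z h)
  have key := hinj.tsum_eq (f := fun z => ‖extlp f z‖ ^ (2 : ℝ≥0∞).toReal) hsupp
  rw [← key]
  exact tsum_congr fun n => by
    show ‖extz ⇑f (n : ℤ)‖ ^ (2 : ℝ≥0∞).toReal = _
    rw [extz_natCast]

/-- The isometric embedding `J : H → L²(𝕋)` as a continuous linear map; it maps the `n`-th
standard basis vector of `ℓ²(ℕ,ℂ)` to `θ ↦ e^{inθ}`, `n ∈ ℕ`. -/
def JH : H →L[ℂ] L2T :=
  LinearMap.mkContinuousOfExistsBound Jlin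
    ⟨1, fun f => by
      simp only [Jlin, LinearMap.coe_mk, AddHom.coe_mk, one_mul, Jmap]
      rw [LinearIsometryEquiv.norm_map]
      exact le_of_eq (norm_extlp f)⟩

end GW

namespace GW

/-- The argument function on the circle: `e^{iθ} ↦ θ` with `θ ∈ (−π, π]`, as a `ℂ`-valued
function. -/
def argFun : Circle2 → ℂ :=
  fun x => (((AddCircle.measurableEquivIoc (2 * Real.pi) (-Real.pi) x : Set.Ioc (-Real.pi) (-Real.pi + 2 * Real.pi)) : ℝ) : ℂ)

lemma argFun_memℒp : MemLp argFun ⊤ μT := by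
  apply memLp_top_of_bound (C := Real.pi)
  · exact (Complex.measurable_ofReal.comp (measurable_subtype_coe.comp
      (AddCircle.measurableEquivIoc (2 * Real.pi) (-Real.pi)).measurable)).aestronglyMeasurable
  · refine Filter.Eventually.of_forall fun x => ?_
    have h := (AddCircle.measurableEquivIoc (2 * Real.pi) (-Real.pi) x).2
    have h1 : -Real.pi < ((AddCircle.measurableEquivIoc (2 * Real.pi) (-Real.pi) x : Set.Ioc (-Real.pi) (-Real.pi + 2 * Real.pi)) : ℝ) := h.1
    have h2 := h.2
    rw [argFun, Complex.norm_real, Real.norm_eq_abs, abs_le]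
    constructor
    · linarith
    · linarith

lemma mul_memℒp (φ : Circle2 → ℂ) (hφ : MemLp φ ⊤ μT) (f : L2T) : MemLp (φ • ⇑f) 2 μT :=
  (Lp.memLp f).smul (p := ⊤) hφ

lemma mul_toLp_add (φ : Circle2 → ℂ) (hφ : MemLp φ ⊤ μT) (f g : L2T) :
    (mul_memℒp φ hφ (f + g)).toLp (φ • ⇑(f + g)) =
      (mul_memℒp φ hφ f).toLp (φ • ⇑f) + (mul_memℒp φ hφ g).toLp (φ • ⇑g) := by
  rw [MemLp.toLp_congr (mul_memℒp φ hφ (f + g)) ((mul_memℒp φ hφ f).add (mul_memℒp φ hφ g))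
    ((Lp.coeFn_add f g).mono fun x hx => by
      simp only [Pi.smul_apply', hx, Pi.add_apply, smul_add])]
  exact MemLp.toLp_add _ _

lemma mul_toLp_smul (φ : Circle2 → ℂ) (hφ : MemLp φ ⊤ μT) (c : ℂ) (f : L2T) :
    (mul_memℒp φ hφ (c • f)).toLp (φ • ⇑(c • f)) = c • (mul_memℒp φ hφ f).toLp (φ • ⇑f) := by
  rw [MemLp.toLp_congr (mul_memℒp φ hφ (c • f)) ((mul_memℒp φ hφ f).const_smul c)
    ((Lp.coeFn_smul c f).mono fun x hx => by
      rw [Pi.smul_apply', hx, Pi.smul_apply, Pi.smul_apply, Pi.smul_apply', smul_comm])]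
  exact MemLp.toLp_const_smul c _

/-- Multiplication by a bounded measurable function, as a linear map on `L²(𝕋)`. -/
def mulLin (φ : Circle2 → ℂ) (hφ : MemLp φ ⊤ μT) : L2T →ₗ[ℂ] L2T where
  toFun f := (mul_memℒp φ hφ f).toLp (φ • ⇑f)
  map_add' f g := mul_toLp_add φ hφ f g
  map_smul' c f := mul_toLp_smul φ hφ c f

/-- Multiplication by a bounded measurable function, as a bounded operator on `L²(𝕋)`. -/
def mulCLM (φ : Circle2 → ℂ) (hφ : MemLp φ ⊤ μT) : L2T →L[ℂ] L2T :=
  LinearMap.mkContinuousOfExistsBound (mulLin φ hφ)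
    ⟨(eLpNorm φ ⊤ μT).toReal, fun f => by
      simp only [mulLin, LinearMap.coe_mk, AddHom.coe_mk]
      rw [Lp.norm_toLp, Lp.norm_def]
      rw [← ENNReal.toReal_mul]
      apply ENNReal.toReal_mono
      · exact ENNReal.mul_ne_top hφ.eLpNorm_ne_top (Lp.memLp f).eLpNorm_ne_top
      · exact eLpNorm_smul_le_mul_eLpNorm (p := ⊤) (q := 2) (r := 2) (Lp.memLp f).1 hφ.1⟩

/-- The Garrison–Wong phase operator `Φ = J* ∘ M_arg ∘ J` on `H`. -/
def Phi : H →L[ℂ] H :=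
  (ContinuousLinearMap.adjoint JH) ∘L (mulCLM argFun argFun_memℒp) ∘L JH

/-- The domain of the number operator: `{f ∈ H : Σ n² |c_n|² < ∞}`. -/
def domN : Set H := {f : H | Summable fun n : ℕ => (n : ℝ) ^ 2 * ‖f n‖ ^ 2}

lemma Nop_memℓp {f : H} (hf : f ∈ domN) : Memℓp (fun n : ℕ => (n : ℂ) * f n) 2 := by
  apply memℓp_gen
  refine Summable.congr hf fun n => ?_
  have h2 : ((2 : ℝ≥0∞)).toReal = ((2 : ℕ) : ℝ) := by norm_num
  rw [h2, Real.rpow_natCast]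
  simp [norm_mul, mul_pow]

/-- The number operator `N`, defined on its maximal domain `domN`: `(Nf)_n = n·c_n`. -/
def Nop (f : H) (hf : f ∈ domN) : H := ⟨fun n : ℕ => (n : ℂ) * f n, Nop_memℓp hf⟩

/-- The standard orthonormal basis `(e_n)` of `H`. -/
def eH (n : ℕ) : H := lp.single 2 n (1 : ℂ)

lemma norm_exp_mul (x : ℝ) (c : ℂ) : ‖Complex.exp ((x : ℂ) * Complex.I) * c‖ = ‖c‖ := by
  rw [norm_mul, Complex.norm_exp_ofReal_mul_I, one_mul]

lemma U_memℓp (t : ℝ) (f : H) : Memℓp (fun n : ℕ => Complex.exp (((n * t : ℝ) : ℂ) * Complex.I) * f n) 2 := by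
  apply memℓp_gen
  refine Summable.congr ((lp.memℓp f).summable (by norm_num)) fun n => ?_
  rw [norm_exp_mul]

/-- The unitary group `U_t = e^{itN}`: `(U_t f)_n = e^{int} f_n`, as a linear map. -/
def Ulin (t : ℝ) : H →ₗ[ℂ] H where
  toFun f := ⟨fun n : ℕ => Complex.exp (((n * t : ℝ) : ℂ) * Complex.I) * f n, U_memℓp t f⟩
  map_add' f g := by
    apply Subtype.ext
    funext n
    show Complex.exp _ * (⇑(f + g)) n = _
    rw [lp.coeFn_add]
    show Complex.exp _ * (f n + g n) =
      Complex.exp _ * f n + Complex.exp _ * g n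
    ring
  map_smul' c f := by
    apply Subtype.ext
    funext n
    show Complex.exp _ * (⇑(c • f)) n = _
    rw [lp.coeFn_smul]
    show Complex.exp _ * (c * f n) = c * (Complex.exp _ * f n)
    ring

/-- The unitary group `U_t = e^{itN}`: `(U_t f)_n = e^{int} f_n`. -/
def U (t : ℝ) : H →L[ℂ] H :=
  LinearMap.mkContinuousOfExistsBound (Ulin t)
    ⟨1, fun f => by
      simp only [Ulin, LinearMap.coe_mk, AddHom.coe_mk, one_mul]
      apply le_of_eq
      rw [lp.norm_eq_tsum_rpow (by norm_num : 0 < (2 : ℝ≥0∞).toReal),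
        lp.norm_eq_tsum_rpow (by norm_num : 0 < (2 : ℝ≥0∞).toReal) f]
      congr 1
      refine tsum_congr fun n => ?_
      show ‖Complex.exp (((n * t : ℝ) : ℂ) * Complex.I) * f n‖ ^ (2 : ℝ≥0∞).toReal = _
      rw [norm_exp_mul]⟩

/-- The indicator function of a subset of the circle, as a `ℂ`-valued function. -/
def indFun (B : Set Circle2) : Circle2 → ℂ := Set.indicator B (fun _ => (1 : ℂ))

lemma indFun_memℒp {B : Set Circle2} (hB : MeasurableSet B) : MemLp (indFun B) ⊤ μT := by
  apply memLp_top_of_bound (C := 1)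
  · exact (aestronglyMeasurable_const.indicator hB)
  · refine Filter.Eventually.of_forall fun x => ?_
    by_cases h : x ∈ B <;> simp [indFun, h]

open scoped Classical in
/-- The POVM `Q(B) = J* ∘ M_{1_B} ∘ J` obtained by compressing multiplication by the
indicator of `B` to `H` (defined to be `0` for non-measurable `B`). -/
def Qop (B : Set Circle2) : H →L[ℂ] H :=
  if h : MeasurableSet B then
    (ContinuousLinearMap.adjoint JH) ∘L (mulCLM (indFun B) (indFun_memℒp h)) ∘L JH
  else 0

end GW

open intervalIntegral

lemma fourierCoeffOn_const_of_ne_zero {a b : ℝ} (hab : a < b) (c : ℂ) {n : ℤ} (hn : n ≠ 0) :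
    fourierCoeffOn hab (fun _ => c) n = 0 := by
  have : Fact (0 < b - a) := ⟨by linarith⟩
  have hconst : AddCircle.liftIoc (b - a) a (fun _ => c) = c • ⇑(fourier 0) := by
    ext x
    simp [AddCircle.liftIoc]
  rw [fourierCoeffOn, hconst, fourierCoeff.const_smul, fourierCoeff_fourier,
    Pi.single_eq_of_ne hn, smul_zero]

lemma fourierCoeffOn_ofReal_of_ne_zero {a b : ℝ} (hab : a < b) {n : ℤ} (hn : n ≠ 0) :
    fourierCoeffOn hab (fun x : ℝ => (x : ℂ)) n =
      (b - a) / (-2 * π * I * n) * fourier (-n) (a : AddCircle (b - a)) := by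
  rw [fourierCoeffOn_of_hasDerivAt hab hn (f := fun x : ℝ => (x : ℂ)) (f' := fun _ => 1)
    (fun x _ => (hasDerivAt_id (x : ℂ)).comp_ofReal) intervalIntegrable_const,
    fourierCoeffOn_const_of_ne_zero hab 1 hn]
  ring

lemma fourierCoeffOn_ofReal_zero {a b : ℝ} (hab : a < b) :
    fourierCoeffOn hab (fun x : ℝ => (x : ℂ)) 0 = (a + b) / 2 := by
  have : (b - a : ℂ) ≠ 0 := by exact_mod_cast (sub_pos.mpr hab).ne'
  rw [fourierCoeffOn_eq_integral]
  simp only [neg_zero, fourier_zero, one_smul, integral_ofReal, integral_id, Complex.real_smul]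
  push_cast
  field_simp
  ring

namespace GW

lemma argFun_eq_liftIoc : argFun = AddCircle.liftIoc (2 * π) (-π) (fun x : ℝ => (x : ℂ)) := rfl

lemma fourierCoeff_argFun_of_ne_zero {n : ℤ} (hn : n ≠ 0) :
    fourierCoeff argFun n = I * (-1) ^ n / n := by
  rw [argFun_eq_liftIoc, fourierCoeff_liftIoc_eq, fourierCoeffOn_ofReal_of_ne_zero _ hn,
    fourier_coe_apply]
  have hexp : cexp (2 * π * I * ((-n : ℤ) : ℂ) * ((-π : ℝ) : ℂ) / ((-π + 2 * π - -π : ℝ) : ℂ))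
      = (-1) ^ n := by
    rw [← exp_pi_mul_I, ← exp_int_mul]
    congr 1
    push_cast
    field_simp
    ring
  have hπ : (π : ℂ) ≠ 0 := ofReal_ne_zero.mpr pi_ne_zero
  have hn' : (n : ℂ) ≠ 0 := Int.cast_ne_zero.mpr hn
  rw [hexp]
  push_cast
  field_simp
  ring_nf
  simp [I_sq]

lemma fourierCoeff_argFun_zero : fourierCoeff argFun 0 = 0 := by
  rw [argFun_eq_liftIoc, fourierCoeff_liftIoc_eq, fourierCoeffOn_ofReal_zero]
  push_cast
  ring

lemma extlp_eH (k : ℕ) : extlp (eH k) = lp.single 2 (k : ℤ) (1 : ℂ) := by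
  ext z
  rcases z with m | m
  all_goals simp [extlp, extz, eH, lp.single_apply, Pi.single_apply]

lemma JH_eH (k : ℕ) : JH (eH k) = fourierBasis (k : ℤ) := by
  change fourierBasis.repr.symm (extlp (eH k)) = _
  rw [extlp_eH, HilbertBasis.repr_symm_single]

lemma coeFn_JH_eH_zero : ⇑(JH (eH 0)) =ᵐ[μT] 1 := by
  rw [JH_eH, Nat.cast_zero, coe_fourierBasis]
  filter_upwards [coeFn_fourierLp 2 (0 : ℤ)] with x hx
  rw [hx, fourier_zero, Pi.one_apply]

lemma coeFn_mulCLM (φ : Circle2 → ℂ) (hφ : MemLp φ ⊤ μT) (f : L2T) :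
    ⇑(mulCLM φ hφ f) =ᵐ[μT] φ • ⇑f :=
  (mul_memℒp φ hφ f).coeFn_toLp

lemma inner_eH_adjoint_JH (k : ℕ) (g : L2T) :
    inner ℂ (eH k) (adjoint JH g) = fourierCoeff g k := by
  rw [adjoint_inner_right, JH_eH, ← fourierBasis_repr, HilbertBasis.repr_apply_apply]

lemma inner_eH_Phi_eH_zero (k : ℕ) :
    inner ℂ (eH k) (Phi (eH 0)) = fourierCoeff argFun k := by
  have hae : ⇑(mulCLM argFun argFun_memℒp (JH (eH 0))) =ᵐ[μT] argFun := by
    filter_upwards [coeFn_mulCLM argFun argFun_memℒp (JH (eH 0)), coeFn_JH_eH_zero]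
      with x hx h1
    rw [hx, Pi.smul_apply', h1, Pi.one_apply, smul_eq_mul, mul_one]
  rw [Phi, comp_apply, comp_apply, inner_eH_adjoint_JH, fourierCoeff_congr_ae hae]

lemma apply_eq_inner_eH (f : H) (n : ℕ) : f n = inner ℂ (eH n) f := by
  simp [eH, lp.inner_single_left]

lemma notMem_domN_of_inv_le_norm {f : H} (hf : ∀ n : ℕ, 1 ≤ n → (n : ℝ)⁻¹ ≤ ‖f n‖) :
    f ∉ domN := by
  intro hs
  obtain ⟨n, hn⟩ :=
    (hs.tendsto_atTop_zero.eventually (gt_mem_nhds one_pos)).exists_forall_of_atTop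
  have hlarge : 1 ≤ ((n + 1 : ℕ) : ℝ) * ‖f (n + 1)‖ :=
    (inv_le_iff_one_le_mul₀' (by positivity)).mp (hf (n + 1) le_add_self)
  have hsmall := hn (n + 1) (Nat.le_succ n)
  nlinarith

/-- The paper's pairing `⟨Φe₀, e_n⟩` is linear in its first argument, so it is
`inner ℂ (eH n) (Phi (eH 0))` in Mathlib's convention. -/
theorem phi_e0_coords_and_not_in_domN :
    (∀ n : ℕ, 1 ≤ n →
      (inner ℂ (eH n) (Phi (eH 0)) : ℂ) = Complex.I * (-1 : ℂ) ^ n / (n : ℂ)) ∧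
    (inner ℂ (eH 0) (Phi (eH 0)) : ℂ) = 0 ∧
    Phi (eH 0) ∉ domN := by
  have hcoord : ∀ n : ℕ, 1 ≤ n → inner ℂ (eH n) (Phi (eH 0)) = I * (-1) ^ n / n := by
    intro n hn
    rw [inner_eH_Phi_eH_zero, fourierCoeff_argFun_of_ne_zero (by omega), zpow_natCast,
      Int.cast_natCast]
  refine ⟨hcoord, ?_, notMem_domN_of_inv_le_norm fun n hn => ?_⟩
  · rw [inner_eH_Phi_eH_zero, Nat.cast_zero, fourierCoeff_argFun_zero]
  · rw [apply_eq_inner_eH, hcoord n hn]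
    simp

end GW
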